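/- For every integer d ≥ 4, the real numbers O_d/O_{d-1}, O_{d-1}/O_{d-2}, O_{d-2}/O_{d-3} satisfy O_d/O_{d-1} ≤ O_{d-1}/O_{d-2} + O_{d-2}/O_{d-3}. -/

import Mathlib

/-- The Macaulay bound `a^⟨t⟩`: writing the (unique, greedy) binomial expansion
`a = C(k(t),t) + C(k(t-1),t-1) + ⋯ + C(k(j),j)` with `k(t) > ⋯ > k(j) ≥ j ≥ 1`,
`macaulay t a = C(k(t)+1,t+1) + C(k(t-1)+1,t) + ⋯ + C(k(j)+1,j+1)`.
(The value at `t = 0` is irrelevant for the definitions below.) -/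
def macaulay : ℕ → ℕ → ℕ
  | 0, a => a
  | t+1, a =>
    if a = 0 then 0
    else
      Nat.choose (Nat.findGreatest (fun m => Nat.choose m (t+1) ≤ a) (a + t + 1) + 1) (t+2)
        + macaulay t (a - Nat.choose
            (Nat.findGreatest (fun m => Nat.choose m (t+1) ≤ a) (a + t + 1)) (t+1))

/-- A finite O-sequence `(a_0, a_1, …, a_s)`, encoded as a nonempty list of
positive integers with `a_0 = 1` and `a_{t+1} ≤ a_t^⟨t⟩` for all `1 ≤ t ≤ s-1`. -/
def IsOSeq (l : List ℕ) : Prop :=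
  l ≠ [] ∧ (∀ x ∈ l, 0 < x) ∧ l.getD 0 0 = 1 ∧
    ∀ t : ℕ, 1 ≤ t → t + 1 < l.length → l.getD (t+1) 0 ≤ macaulay t (l.getD t 0)

/-- `numOSeq d` = the number `O_d` of finite O-sequences of multiplicity `d`. -/
noncomputable def numOSeq (d : ℕ) : ℕ := {l : List ℕ | IsOSeq l ∧ l.sum = d}.ncard

/-- `numASeq d` = the number `A_d` of finite O-sequences of multiplicity `d`
whose last entry is strictly greater than `1`. -/
noncomputable def numASeq (d : ℕ) : ℕ :=
  {l : List ℕ | IsOSeq l ∧ l.sum = d ∧ 1 < l.getLastD 0}.ncard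

/-- `numOCond p n k d` = the number `O(p,n,k,d)` of finite O-sequences
`(a_0,…,a_s)` of multiplicity `d` with `s ≤ n`, `a_i = C(p-1+i, i)` for all
`0 ≤ i ≤ k` (in particular `s ≥ k`), and `a_i < C(p-1+i, i)` for `k < i ≤ s`. -/
noncomputable def numOCond (p n k d : ℕ) : ℕ :=
  {l : List ℕ | IsOSeq l ∧ l.sum = d ∧ l.length - 1 ≤ n ∧ k ≤ l.length - 1 ∧
    (∀ i ≤ k, l.getD i 0 = Nat.choose (p - 1 + i) i) ∧
    (∀ i : ℕ, k < i → i < l.length → l.getD i 0 < Nat.choose (p - 1 + i) i)}.ncard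

lemma macaulay_pos (t a : ℕ) (ha : 0 < a) : 0 < macaulay t a := by
  cases t with
  | zero => simpa [macaulay]
  | succ t =>
    rw [macaulay, if_neg ha.ne']
    have h1 : t + 1 ≤ Nat.findGreatest (fun m => Nat.choose m (t+1) ≤ a) (a + t + 1) := by
      apply Nat.le_findGreatest
      · omega
      · simpa using Nat.succ_le_of_lt ha
    have : 0 < Nat.choose (Nat.findGreatest (fun m => Nat.choose m (t+1) ≤ a) (a + t + 1) + 1) (t+2) :=
      Nat.choose_pos (by omega)
    omega

lemma length_le_sum (l : List ℕ) (h : ∀ x ∈ l, 0 < x) : l.length ≤ l.sum := by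
  induction l with
  | nil => simp
  | cons a l ih =>
    simp only [List.length_cons, List.sum_cons]
    have := h a (by simp)
    have := ih (fun x hx => h x (by simp [hx]))
    omega

lemma finite_posSum (d : ℕ) : {l : List ℕ | (∀ x ∈ l, 0 < x) ∧ l.sum = d}.Finite := by
  have h1 : {l : List (Fin (d+1)) | l.length ≤ d}.Finite := List.finite_length_le _ d
  apply (h1.image (List.map Fin.val)).subset
  rintro l ⟨hpos, hsum⟩
  have hmem : ∀ x ∈ l, x < d + 1 := by
    intro x hx
    have := List.le_sum_of_mem hx
    omega
  refine ⟨l.attach.map (fun x => (⟨x.1, hmem x.1 x.2⟩ : Fin (d+1))), ?_, ?_⟩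
  · have : (l.attach.map (fun x => (⟨x.1, hmem x.1 x.2⟩ : Fin (d+1)))).length = l.length := by
      simp
    have := length_le_sum l hpos
    simp only [Set.mem_setOf_eq]
    omega
  · simp [List.map_map, Function.comp]

lemma isOSeq_concat_iff (l : List ℕ) (hl : l ≠ []) (a : ℕ) :
    IsOSeq (l ++ [a]) ↔
      IsOSeq l ∧ 0 < a ∧
        ∀ t : ℕ, 1 ≤ t → t + 1 = l.length → a ≤ macaulay t (l.getD t 0) := by
  have hn : 0 < l.length := List.length_pos_iff.mpr hl
  constructor
  · rintro ⟨-, hpos, hhead, hcond⟩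
    refine ⟨⟨hl, fun x hx => hpos x (by simp [hx]), ?_, ?_⟩, hpos a (by simp), ?_⟩
    · rw [List.getD_append _ _ _ 0 hn] at hhead; exact hhead
    · intro t ht htl
      have h1 := hcond t ht (by simp; omega)
      rwa [List.getD_append _ _ _ t (by omega), List.getD_append _ _ _ (t+1) (by omega)] at h1
    · intro t ht htl
      have h1 := hcond t ht (by simp; omega)
      rw [List.getD_append _ _ _ t (by omega),
        List.getD_append_right _ _ _ (t+1) (by omega), htl] at h1
      simpa using h1
  · rintro ⟨⟨-, hpos, hhead, hcond⟩, ha, hlast⟩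
    refine ⟨by simp, ?_, ?_, ?_⟩
    · intro x hx
      rcases List.mem_append.mp hx with h | h
      · exact hpos x h
      · simp at h; omega
    · rw [List.getD_append _ _ _ 0 hn]; exact hhead
    · intro t ht htl
      simp only [List.length_append, List.length_singleton] at htl
      rcases lt_or_eq_of_le (by omega : t + 1 + 1 ≤ l.length + 1) with h | h
      · rw [List.getD_append _ _ _ t (by omega), List.getD_append _ _ _ (t+1) (by omega)]
        exact hcond t ht (by omega)
      · have he : t + 1 = l.length := by omega
        rw [List.getD_append _ _ _ t (by omega),
          List.getD_append_right _ _ _ (t+1) (by omega), he]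
        simpa using hlast t ht he


lemma finite_S (d : ℕ) : {l : List ℕ | IsOSeq l ∧ l.sum = d}.Finite :=
  (finite_posSum d).subset (fun l ⟨h1, h2⟩ => ⟨h1.2.1, h2⟩)

lemma getD_mem_pos {l : List ℕ} (h : IsOSeq l) {t : ℕ} (ht : t < l.length) :
    0 < l.getD t 0 := by
  rw [List.getD_eq_getElem l 0 ht]
  exact h.2.1 _ (List.getElem_mem ht)

lemma getLastD_eq_getLast {α : Type*} (l : List α) (h : l ≠ []) (d : α) :
    l.getLastD d = l.getLast h := by
  rw [List.getLastD_eq_getLast?, List.getLast?_eq_getLast h]; rfl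

lemma getLastD_pos {l : List ℕ} (h : IsOSeq l) : 0 < l.getLastD 0 := by
  rw [getLastD_eq_getLast l h.1]
  exact h.2.1 _ (List.getLast_mem h.1)

lemma one_le_numOSeq (d : ℕ) (hd : 1 ≤ d) : 1 ≤ numOSeq d := by
  rw [numOSeq, Nat.one_le_iff_ne_zero, ← Nat.pos_iff_ne_zero, Set.ncard_pos (finite_S d)]
  refine ⟨List.replicate d 1, ?_, by simp [List.sum_replicate]⟩
  refine ⟨by simp; omega, by simp, ?_, ?_⟩
  · rw [List.getD_eq_getElem _ 0 (by simpa using Nat.lt_of_succ_le hd)]; simp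
  · intro t ht htl
    simp only [List.length_replicate] at htl
    rw [List.getD_eq_getElem _ 0 (by simpa using htl), List.getD_eq_getElem _ 0 (by simp; omega)]
    simpa using Nat.succ_le_of_lt (macaulay_pos t 1 one_pos)

lemma numOSeq_mono (d : ℕ) (hd : 1 ≤ d) : numOSeq d ≤ numOSeq (d + 1) := by
  apply Set.ncard_le_ncard_of_injOn (fun l => l ++ [1]) ?_ ?_ (finite_S (d+1))
  · rintro l ⟨hl, hsum⟩
    constructor
    · rw [isOSeq_concat_iff l hl.1 1]
      exact ⟨hl, one_pos, fun t ht htl => macaulay_pos t _ (getD_mem_pos hl (by omega))⟩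
    · simp [hsum]
  · intro l1 _ l2 _ h
    exact List.append_cancel_right h

lemma two_le_length {l : List ℕ} (h : IsOSeq l) (h2 : 2 ≤ l.sum) : 2 ≤ l.length := by
  by_contra hc
  have h1 : l.length = 1 := by
    have := List.length_pos_iff.mpr h.1; omega
  obtain ⟨a, rfl⟩ := List.length_eq_one_iff.mp h1
  have := h.2.2.1
  simp at this
  simp [this] at h2

lemma decomp {l : List ℕ} (h : IsOSeq l) (h2 : 2 ≤ l.length) :
    l.dropLast ≠ [] ∧ l = l.dropLast ++ [l.getLastD 0] := by
  have hne := h.1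
  constructor
  · have hl := l.length_dropLast
    intro hc
    rw [hc] at hl
    simp at hl
    omega
  · rw [getLastD_eq_getLast l hne]
    exact (List.dropLast_append_getLast hne).symm

lemma numOSeq_le_two_mul (d : ℕ) (hd : 1 ≤ d) : numOSeq (d + 1) ≤ 2 * numOSeq d := by
  classical
  set S1 : Set (List ℕ) :=
    {l | (IsOSeq l ∧ l.sum = d + 1) ∧ l.getLastD 0 = 1} with hS1
  set S2 : Set (List ℕ) :=
    {l | (IsOSeq l ∧ l.sum = d + 1) ∧ 1 < l.getLastD 0} with hS2
  have hsplit : {l : List ℕ | IsOSeq l ∧ l.sum = d + 1} = S1 ∪ S2 := by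
    ext l
    simp only [hS1, hS2, Set.mem_setOf_eq, Set.mem_union]
    constructor
    · intro hl
      have := getLastD_pos hl.1
      rcases Nat.lt_or_ge 1 (l.getLastD 0) with h | h
      · exact Or.inr ⟨hl, h⟩
      · exact Or.inl ⟨hl, by omega⟩
    · rintro (⟨h, -⟩ | ⟨h, -⟩) <;> exact h
  have hle1 : S1.ncard ≤ numOSeq d := by
    apply Set.ncard_le_ncard_of_injOn (fun l => l.dropLast) ?_ ?_ (finite_S d)
    · rintro l ⟨⟨hl, hsum⟩, hlast⟩
      obtain ⟨hdne, hdec⟩ := decomp hl (two_le_length hl (by omega))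
      rw [hlast] at hdec
      have h2 : IsOSeq (l.dropLast ++ [1]) := by rw [← hdec]; exact hl
      rw [isOSeq_concat_iff _ hdne 1] at h2
      show IsOSeq l.dropLast ∧ l.dropLast.sum = d
      refine ⟨h2.1, ?_⟩
      have : l.sum = l.dropLast.sum + 1 := by
        conv_lhs => rw [hdec]
        simp
      omega
    · rintro l1 ⟨⟨hl1, hsum1⟩, hlast1⟩ l2 ⟨⟨hl2, hsum2⟩, hlast2⟩ h
      obtain ⟨-, hdec1⟩ := decomp hl1 (two_le_length hl1 (by omega))
      obtain ⟨-, hdec2⟩ := decomp hl2 (two_le_length hl2 (by omega))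
      replace h : l1.dropLast = l2.dropLast := h
      rw [hdec1, hdec2, hlast1, hlast2, h]
  have hle2 : S2.ncard ≤ numOSeq d := by
    apply Set.ncard_le_ncard_of_injOn
      (fun l => l.dropLast ++ [l.getLastD 0 - 1]) ?_ ?_ (finite_S d)
    · rintro l ⟨⟨hl, hsum⟩, hlast⟩
      obtain ⟨hdne, hdec⟩ := decomp hl (two_le_length hl (by omega))
      have h2 : IsOSeq (l.dropLast ++ [l.getLastD 0]) := by rw [← hdec]; exact hl
      rw [isOSeq_concat_iff _ hdne _] at h2
      obtain ⟨hm, -, hmac⟩ := h2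
      show IsOSeq (l.dropLast ++ [l.getLastD 0 - 1]) ∧ (l.dropLast ++ [l.getLastD 0 - 1]).sum = d
      constructor
      · rw [isOSeq_concat_iff _ hdne _]
        exact ⟨hm, by omega, fun t ht htl => le_trans (by omega) (hmac t ht htl)⟩
      · have : l.sum = l.dropLast.sum + l.getLastD 0 := by
          conv_lhs => rw [hdec]
          simp
        simp only [List.sum_append, List.sum_cons, List.sum_nil]
        omega
    · rintro l1 ⟨⟨hl1, hsum1⟩, hlast1⟩ l2 ⟨⟨hl2, hsum2⟩, hlast2⟩ h
      obtain ⟨-, hdec1⟩ := decomp hl1 (two_le_length hl1 (by omega))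
      obtain ⟨-, hdec2⟩ := decomp hl2 (two_le_length hl2 (by omega))
      replace h : l1.dropLast ++ [l1.getLastD 0 - 1] = l2.dropLast ++ [l2.getLastD 0 - 1] := h
      obtain ⟨he1, he2⟩ := List.append_inj' h (by simp)
      simp only [List.cons.injEq] at he2
      have hb : l1.getLastD 0 = l2.getLastD 0 := by omega
      rw [hdec1, hdec2, he1, hb]
  calc numOSeq (d + 1) = (S1 ∪ S2).ncard := by rw [numOSeq, hsplit]
    _ ≤ S1.ncard + S2.ncard := Set.ncard_union_le S1 S2
    _ ≤ 2 * numOSeq d := by omega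


/-- For every integer `d ≥ 4`,
`O_d/O_{d-1} ≤ O_{d-1}/O_{d-2} + O_{d-2}/O_{d-3}` as real numbers. -/
theorem Od_ratio_subadditive (d : ℕ) (hd : 4 ≤ d) :
    (numOSeq d : ℝ) / (numOSeq (d - 1) : ℝ)
      ≤ (numOSeq (d - 1) : ℝ) / (numOSeq (d - 2) : ℝ)
        + (numOSeq (d - 2) : ℝ) / (numOSeq (d - 3) : ℝ) := by

  have e1 : d - 3 + 1 = d - 2 := by omega
  have e2 : d - 2 + 1 = d - 1 := by omega
  have e3 : d - 1 + 1 = d := by omega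
  have ha : 1 ≤ numOSeq (d - 3) := one_le_numOSeq _ (by omega)
  have hab : numOSeq (d - 3) ≤ numOSeq (d - 2) := e1 ▸ numOSeq_mono (d - 3) (by omega)
  have hbc : numOSeq (d - 2) ≤ numOSeq (d - 1) := e2 ▸ numOSeq_mono (d - 2) (by omega)
  have hde : numOSeq d ≤ 2 * numOSeq (d - 1) := e3 ▸ numOSeq_le_two_mul (d - 1) (by omega)
  have ha' : (1 : ℝ) ≤ (numOSeq (d - 3) : ℝ) := by exact_mod_cast ha
  have hab' : (numOSeq (d - 3) : ℝ) ≤ (numOSeq (d - 2) : ℝ) := by exact_mod_cast hab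
  have hbc' : (numOSeq (d - 2) : ℝ) ≤ (numOSeq (d - 1) : ℝ) := by exact_mod_cast hbc
  have hde' : (numOSeq d : ℝ) ≤ 2 * (numOSeq (d - 1) : ℝ) := by exact_mod_cast hde
  have h1 : (numOSeq d : ℝ) / (numOSeq (d - 1) : ℝ) ≤ 2 := by
    rw [div_le_iff₀ (by linarith)]
    linarith
  have h2 : (1 : ℝ) ≤ (numOSeq (d - 1) : ℝ) / (numOSeq (d - 2) : ℝ) := by
    rw [le_div_iff₀ (by linarith)]
    linarith
  have h3 : (1 : ℝ) ≤ (numOSeq (d - 2) : ℝ) / (numOSeq (d - 3) : ℝ) := by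
    rw [le_div_iff₀ (by linarith)]
    linarith
  linarith
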